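/- Fix μ > 0 and an integer m ≥ 1. For all z ∈ ℝ^m: (i) inf over p ∈ (0,1)^m of [ Σ_{i∈[m]} p_i z_i + μ Σ_{i∈[m]} ( p_i log p_i + (1−p_i) log(1−p_i) − 1 ) ] = −μ m − μ Σ_{i∈[m]} log( 1 + exp(−z_i/μ) ); and (ii) inf over q with q_I > 0 for all I ⊆ [m] and Σ_{I⊆[m]} q_I = 1 of [ Σ_{I⊆[m]} q_I Σ_{i∈I} z_i + μ Σ_{I⊆[m]} ( q_I log q_I − q_I ) ] = −μ − μ log( Σ_{I⊆[m]} exp( −(1/μ) Σ_{i∈I} z_i ) ). Consequently the logistic example loss Σ_{i∈[m]} log(1 + exp(−z_i/μ)) and the exponential rado loss Σ_{I⊆[m]} exp(−(1/μ) Σ_{i∈I} z_i) are equivalent: the negatives of the two optimal values above are strictly increasing functions of these two losses respectively. -/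

import Mathlib

/-!
Both optimal values are instances of the Gibbs variational principle: for a finite family of
scores `a`, a temperature `μ > 0` and any positive probability vector `q`,
`∑ q a + μ ∑ q log q ≥ -μ log ∑ exp (-a / μ)`, with equality at the Gibbs weights
`q ∝ exp (-a / μ)`. The inequality is the summed form of `q - r ≤ q (log q - log r)` with `r` the
Gibbs weights. The rado game is this principle over the subsets of `[m]`; the example game
separates into `m` independent copies of it over a two-point set, with scores `z_i` and `0`.
The rado loss is at least `1` (the empty subset contributes `exp 0`), so `-infR` is a strictly
increasing function of it through any strictly monotone extension of `log` from `[1, ∞)`.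
-/

/-- `L_e`-optimal value for the generator `φ_e(z) = z log z + (1−z) log(1−z) − 1`. -/
noncomputable def infE (m : ℕ) (μ : ℝ) (z : Fin m → ℝ) : ℝ :=
  ⨅ p : {p : Fin m → ℝ // ∀ i, 0 < p i ∧ p i < 1},
    (∑ i, p.1 i * z i +
      μ * ∑ i, (p.1 i * Real.log (p.1 i) + (1 - p.1 i) * Real.log (1 - p.1 i) - 1))

/-- `L_r`-optimal value for the generator `φ_r(z) = z log z − z`. -/
noncomputable def infR (m : ℕ) (μ : ℝ) (z : Fin m → ℝ) : ℝ :=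
  ⨅ q : {q : Finset (Fin m) → ℝ // (∀ I, 0 < q I) ∧ ∑ I : Finset (Fin m), q I = 1},
    (∑ I : Finset (Fin m), q.1 I * ∑ i ∈ I, z i +
      μ * ∑ I : Finset (Fin m), (q.1 I * Real.log (q.1 I) - q.1 I))

/-- The logistic example loss `Σ_{i∈[m]} log(1 + exp(−z_i/μ))`. -/
noncomputable def logisticLoss (m : ℕ) (μ : ℝ) (z : Fin m → ℝ) : ℝ :=
  ∑ i, Real.log (1 + Real.exp (-z i / μ))

/-- The exponential rado loss `Σ_{I⊆[m]} exp(−(1/μ) Σ_{i∈I} z_i)`. -/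
noncomputable def expRadoLoss (m : ℕ) (μ : ℝ) (z : Fin m → ℝ) : ℝ :=
  ∑ I : Finset (Fin m), Real.exp (-(1 / μ) * ∑ i ∈ I, z i)

open Real Finset

lemma sub_le_mul_log_sub_log {a b : ℝ} (ha : 0 < a) (hb : 0 < b) :
    a - b ≤ a * (log a - log b) := by
  have h := mul_le_mul_of_nonneg_left (log_le_sub_one_of_pos (div_pos hb ha)) ha.le
  rw [log_div hb.ne' ha.ne', mul_sub, mul_sub, mul_div_cancel₀ _ ha.ne', mul_one] at h
  linarith

lemma ciInf_eq_of_forall_ge_of_eq {α : Type*} {f : α → ℝ} {c : ℝ} (hle : ∀ x, c ≤ f x)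
    (x₀ : α) (hx₀ : f x₀ = c) : ⨅ x, f x = c :=
  have : Nonempty α := ⟨x₀⟩
  ciInf_eq_of_forall_ge_of_forall_gt_exists_lt hle fun _ hw => ⟨x₀, hx₀.trans_lt hw⟩

lemma exists_strictMono_eqOn_log : ∃ f : ℝ → ℝ, StrictMono f ∧ Set.EqOn f log (Set.Ici 1) := by
  set f : ℝ → ℝ := fun x => if x ≤ 1 then x - 1 else log x
  have hlin : Set.EqOn f (· - 1) (Set.Iic 1) := fun x (hx : x ≤ 1) => if_pos hx
  have hlog : Set.EqOn f log (Set.Ici 1) := by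
    intro x (hx : 1 ≤ x)
    rcases hx.eq_or_lt with rfl | hx
    · simp [f]
    · simp [f, not_le.2 hx]
  refine ⟨f, StrictMonoOn.Iic_union_Ici (a := 1) ?_ ?_, hlog⟩
  · exact StrictMonoOn.congr (fun x _ y _ hxy => sub_lt_sub_right hxy 1) hlin.symm
  · exact (strictMonoOn_log.mono fun x (hx : 1 ≤ x) => zero_lt_one.trans_le hx).congr hlog.symm

section Gibbs

variable {ι : Type*} [Fintype ι] (μ : ℝ) (a : ι → ℝ)

noncomputable def gibbsWeights (i : ι) : ℝ :=
  exp (-a i / μ) / ∑ j, exp (-a j / μ)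

variable [Nonempty ι]

lemma sum_exp_neg_div_pos : 0 < ∑ j, exp (-a j / μ) :=
  sum_pos (fun _ _ => exp_pos _) univ_nonempty

lemma gibbsWeights_pos (i : ι) : 0 < gibbsWeights μ a i :=
  div_pos (exp_pos _) (sum_exp_neg_div_pos μ a)

lemma sum_gibbsWeights : ∑ i, gibbsWeights μ a i = 1 := by
  simp_rw [gibbsWeights, ← sum_div, div_self (sum_exp_neg_div_pos μ a).ne']

lemma log_gibbsWeights (i : ι) :
    log (gibbsWeights μ a i) = -a i / μ - log (∑ j, exp (-a j / μ)) := by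
  rw [gibbsWeights, log_div (exp_pos _).ne' (sum_exp_neg_div_pos μ a).ne', log_exp]

variable {μ}

lemma sum_mul_log_sub_log_gibbsWeights (hμ : μ ≠ 0) {q : ι → ℝ} (hq : ∑ i, q i = 1) :
    ∑ i, q i * (log (q i) - log (gibbsWeights μ a i)) =
      ∑ i, q i * log (q i) + (∑ i, q i * a i) / μ + log (∑ j, exp (-a j / μ)) := by
  simp only [log_gibbsWeights]
  set L := log (∑ j, exp (-a j / μ))
  have h : ∀ i, q i * (log (q i) - (-a i / μ - L)) = q i * log (q i) + q i * a i / μ + L * q i := by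
    intro i
    field_simp
    ring
  simp only [h, sum_add_distrib, ← mul_sum, ← sum_div, hq, mul_one]

lemma gibbsWeights_objective (hμ : μ ≠ 0) :
    ∑ i, gibbsWeights μ a i * a i + μ * ∑ i, gibbsWeights μ a i * log (gibbsWeights μ a i) =
      -μ * log (∑ i, exp (-a i / μ)) := by
  have h := sum_mul_log_sub_log_gibbsWeights a hμ (sum_gibbsWeights μ a)
  simp only [sub_self, mul_zero, sum_const_zero] at h
  field_simp at h ⊢
  linarith

end Gibbs

theorem neg_mul_log_sum_exp_le {ι : Type*} [Fintype ι] {μ : ℝ} (hμ : 0 < μ) (a : ι → ℝ)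
    {q : ι → ℝ} (hq : ∀ i, 0 < q i) (hq1 : ∑ i, q i = 1) :
    -μ * log (∑ i, exp (-a i / μ)) ≤ ∑ i, q i * a i + μ * ∑ i, q i * log (q i) := by
  have : Nonempty ι := by
    by_contra h
    rw [not_nonempty_iff] at h
    simp at hq1
  have key := sum_le_sum fun i (_ : i ∈ univ) =>
    sub_le_mul_log_sub_log (hq i) (gibbsWeights_pos μ a i)
  rw [sum_sub_distrib, hq1, sum_gibbsWeights, sub_self,
    sum_mul_log_sub_log_gibbsWeights a hμ.ne' hq1] at key
  have := mul_le_mul_of_nonneg_left key hμ.le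
  rw [mul_zero, mul_add, mul_add, mul_div_cancel₀ _ hμ.ne'] at this
  linarith

lemma neg_mul_log_one_add_exp_le {μ : ℝ} (hμ : 0 < μ) (z : ℝ) {p : ℝ} (hp0 : 0 < p) (hp1 : p < 1) :
    -μ * log (1 + exp (-z / μ)) ≤ p * z + μ * (p * log p + (1 - p) * log (1 - p)) := by
  have h := neg_mul_log_sum_exp_le hμ ![z, 0] (q := ![p, 1 - p])
    (by simp [Fin.forall_fin_two, hp0, hp1]) (by simp)
  simpa [Fin.sum_univ_two, add_comm] using h

lemma exists_mul_add_mul_log_eq {μ : ℝ} (hμ : 0 < μ) (z : ℝ) :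
    ∃ p, 0 < p ∧ p < 1 ∧
      p * z + μ * (p * log p + (1 - p) * log (1 - p)) = -μ * log (1 + exp (-z / μ)) := by
  have hg1 : gibbsWeights μ ![z, 0] 1 = 1 - gibbsWeights μ ![z, 0] 0 := by
    have := sum_gibbsWeights μ ![z, 0]
    rw [Fin.sum_univ_two] at this
    linarith
  refine ⟨gibbsWeights μ ![z, 0] 0, gibbsWeights_pos μ _ 0,
    by linarith [gibbsWeights_pos μ ![z, 0] 1], ?_⟩
  have h := gibbsWeights_objective ![z, 0] hμ.ne'
  rw [add_comm (1 : ℝ)]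
  simpa [Fin.sum_univ_two, hg1] using h

theorem infE_eq {m : ℕ} {μ : ℝ} (hμ : 0 < μ) (z : Fin m → ℝ) :
    infE m μ z = -μ * m - μ * ∑ i, log (1 + exp (-z i / μ)) := by
  have hm : μ * m = ∑ _i : Fin m, μ := by simp [mul_comm]
  have hsplit : ∀ p : Fin m → ℝ,
      ∑ i, p i * z i + μ * ∑ i, (p i * log (p i) + (1 - p i) * log (1 - p i) - 1) =
        ∑ i, (p i * z i + μ * (p i * log (p i) + (1 - p i) * log (1 - p i))) - μ * m := by
    intro p
    rw [hm, mul_sum, ← sum_add_distrib, ← sum_sub_distrib]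
    exact sum_congr rfl fun i _ => by ring
  have hvalue : -μ * m - μ * ∑ i, log (1 + exp (-z i / μ)) =
      ∑ i, -μ * log (1 + exp (-z i / μ)) - μ * m := by
    simp only [neg_mul, mul_sum, sum_neg_distrib]
    ring
  choose p hp0 hp1 hp using fun i => exists_mul_add_mul_log_eq hμ (z i)
  refine ciInf_eq_of_forall_ge_of_eq (fun q => ?_) ⟨p, fun i => ⟨hp0 i, hp1 i⟩⟩ ?_
  · rw [hsplit, hvalue]
    gcongr with i
    exact neg_mul_log_one_add_exp_le hμ (z i) (q.2 i).1 (q.2 i).2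
  · rw [hsplit, hvalue, sum_congr rfl fun i _ => hp i]

theorem infR_eq {m : ℕ} {μ : ℝ} (hμ : 0 < μ) (z : Fin m → ℝ) :
    infR m μ z = -μ - μ * log (∑ I : Finset (Fin m), exp (-(1 / μ) * ∑ i ∈ I, z i)) := by
  set a : Finset (Fin m) → ℝ := fun I => ∑ i ∈ I, z i
  have hsplit : ∀ q : Finset (Fin m) → ℝ, ∑ I, q I = 1 →
      ∑ I, q I * a I + μ * ∑ I, (q I * log (q I) - q I) =
        ∑ I, q I * a I + μ * ∑ I, q I * log (q I) - μ := by
    intro q hq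
    rw [sum_sub_distrib, hq]
    ring
  have hvalue : -μ - μ * log (∑ I, exp (-(1 / μ) * a I)) = -μ * log (∑ I, exp (-a I / μ)) - μ := by
    have h : ∀ x, -(1 / μ) * x = -x / μ := fun x => by ring
    simp only [h]
    ring
  rw [hvalue]
  refine ciInf_eq_of_forall_ge_of_eq (fun q => ?_)
    ⟨gibbsWeights μ a, gibbsWeights_pos μ a, sum_gibbsWeights μ a⟩ ?_
  · rw [hsplit q.1 q.2.2]
    gcongr
    exact neg_mul_log_sum_exp_le hμ a q.2.1 q.2.2
  · rw [hsplit _ (sum_gibbsWeights μ a), gibbsWeights_objective a hμ.ne']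

lemma one_le_expRadoLoss (m : ℕ) (μ : ℝ) (z : Fin m → ℝ) : 1 ≤ expRadoLoss m μ z := by
  have h := single_le_sum (fun I _ => (exp_pos (-(1 / μ) * ∑ i ∈ I, z i)).le)
    (mem_univ (∅ : Finset (Fin m)))
  rwa [sum_empty, mul_zero, exp_zero] at h

theorem stmt5_general (m : ℕ) (μ : ℝ) (hμ : 0 < μ) :
    (∀ z : Fin m → ℝ,
      infE m μ z = -μ * m - μ * ∑ i, Real.log (1 + Real.exp (-z i / μ))) ∧
    (∀ z : Fin m → ℝ,
      infR m μ z = -μ - μ * Real.log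
        (∑ I : Finset (Fin m), Real.exp (-(1 / μ) * ∑ i ∈ I, z i))) ∧
    (∃ fe fr : ℝ → ℝ, StrictMono fe ∧ StrictMono fr ∧
      ∀ z : Fin m → ℝ,
        -infE m μ z = fe (logisticLoss m μ z) ∧
        -infR m μ z = fr (expRadoLoss m μ z)) := by
  obtain ⟨g, hg_mono, hg_log⟩ := exists_strictMono_eqOn_log
  refine ⟨infE_eq hμ, infR_eq hμ, fun x => μ * m + μ * x, fun x => μ + μ * g x,
    (strictMono_mul_left_of_pos hμ).const_add _,
    ((strictMono_mul_left_of_pos hμ).comp hg_mono).const_add _, fun z => ⟨?_, ?_⟩⟩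
  · rw [infE_eq hμ, logisticLoss]
    ring
  · dsimp only
    rw [infR_eq hμ, hg_log (one_le_expRadoLoss m μ z), expRadoLoss]
    ring

/-- Corollary 1: closed forms of the two optimal game values, implying the
equivalence of the logistic example loss and the exponential rado loss. -/
theorem stmt5 (m : ℕ) (hm : 1 ≤ m) (μ : ℝ) (hμ : 0 < μ) :
    (∀ z : Fin m → ℝ,
      infE m μ z = -μ * m - μ * ∑ i, Real.log (1 + Real.exp (-z i / μ))) ∧
    (∀ z : Fin m → ℝ,
      infR m μ z = -μ - μ * Real.log
        (∑ I : Finset (Fin m), Real.exp (-(1 / μ) * ∑ i ∈ I, z i))) ∧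
    (∃ fe fr : ℝ → ℝ, StrictMono fe ∧ StrictMono fr ∧
      ∀ z : Fin m → ℝ,
        -infE m μ z = fe (logisticLoss m μ z) ∧
        -infR m μ z = fr (expRadoLoss m μ z)) :=
  stmt5_general m μ hμ
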